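/- Let R(λ) = A₀ + λA₁ + C(A − λE)⁻¹B be invertible, Ŵ(λ) = C(A − λE)⁻¹, S(λ) = [R(λ)⁻¹, λR(λ)⁻¹, R(λ)⁻¹Ŵ(λ)], and suppose S(λ) has full row rank (so S(λ)S(λ)* is invertible). Let v be a unit right singular vector of S(λ) for σ_min(S(λ)), the smallest singular value, and set Z(λ) = (S(λ)S(λ)*)⁻¹. Define ΔA₀ = −(R(λ)⁻¹)*Z(λ)vv*, ΔA₁ = −λ̄(R(λ)⁻¹)*Z(λ)vv*, ΔB = −(R(λ)⁻¹Ŵ(λ))*Z(λ)vv*. Then (I + R(λ)⁻¹(ΔA₀ + λΔA₁ + Ŵ(λ)ΔB))v = 0, so R(λ) + ΔR(λ) is singular, and the block perturbation Δ = [ΔA₀; ΔA₁; ΔB] satisfies ‖Δ‖_F = 1/σ_min(S(λ)). -/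

import Mathlib

open Matrix BigOperators

noncomputable def evnorm {n : Type*} [Fintype n] (v : n → ℂ) : ℝ :=
  Real.sqrt (∑ i, ‖v i‖ ^ 2)

noncomputable def frob {m n : Type*} [Fintype m] [Fintype n] (M : Matrix m n ℂ) : ℝ :=
  Real.sqrt (∑ i, ∑ j, ‖M i j‖ ^ 2)

noncomputable def sigmaMax {m n : Type*} [Fintype m] [Fintype n] (T : Matrix m n ℂ) : ℝ :=
  sSup {x | ∃ v, evnorm v = 1 ∧ x = evnorm (T.mulVec v)}

noncomputable def sigmaMin {m n : Type*} [Fintype m] [Fintype n] (T : Matrix m n ℂ) : ℝ :=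
  sInf {x | ∃ v, evnorm v = 1 ∧ x = evnorm (T.mulVec v)}

def hcat3 {i a b c : Type*} (A : Matrix i a ℂ) (B : Matrix i b ℂ) (C : Matrix i c ℂ) :
    Matrix i (a ⊕ b ⊕ c) ℂ :=
  Matrix.of fun x j => match j with
    | Sum.inl j => A x j
    | Sum.inr (Sum.inl j) => B x j
    | Sum.inr (Sum.inr j) => C x j

def vcat3 {a b c j : Type*} (A : Matrix a j ℂ) (B : Matrix b j ℂ) (C : Matrix c j ℂ) :
    Matrix (a ⊕ b ⊕ c) j ℂ :=
  Matrix.of fun i y => match i with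
    | Sum.inl i => A i y
    | Sum.inr (Sum.inl i) => B i y
    | Sum.inr (Sum.inr i) => C i y

noncomputable def Lnorm (m : ℕ) (μ : ℂ) : ℝ :=
  Real.sqrt (∑ i ∈ Finset.range (m + 1), ‖μ‖ ^ (2 * i))

/-!
With `S = [R⁻¹, μ R⁻¹, R⁻¹ Ŵ]`, the perturbed pencil satisfies `R⁻¹ ΔR = S Δ` for the stacked
perturbation `Δ = [ΔA₀; ΔA₁; ΔB]`, and the given `Δ` is the minimum-norm solution
`Δ = -S* (S S*)⁻¹ v v*` of `S Δ = -v v*`. Hence `(I + R⁻¹ ΔR) v = v - v = 0`. Since `v` is an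
eigenvector of `S S*` for `σ²`, `Δ` is the rank-one matrix `-σ⁻² (S* v) v*`, and
`‖S* v‖² = v* S S* v = σ²`, so `‖Δ‖_F = σ⁻² · σ = 1 / σ`.
-/

section BlockMatrices

variable {ι δ α β γ κ : Type*}

lemma conjTranspose_hcat3 (A : Matrix ι α ℂ) (B : Matrix ι β ℂ) (C : Matrix ι γ ℂ) :
    (hcat3 A B C)ᴴ = vcat3 Aᴴ Bᴴ Cᴴ := by
  ext x y
  rcases x with x | x | x <;> rfl

lemma hcat3_mul_vcat3 [Fintype α] [Fintype β] [Fintype γ]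
    (A : Matrix ι α ℂ) (B : Matrix ι β ℂ) (C : Matrix ι γ ℂ)
    (D : Matrix α κ ℂ) (E : Matrix β κ ℂ) (F : Matrix γ κ ℂ) :
    hcat3 A B C * vcat3 D E F = A * D + B * E + C * F := by
  ext x y
  simp [mul_apply, hcat3, vcat3, Fintype.sum_sum_type, add_assoc]

lemma vcat3_mul [Fintype ι] (A : Matrix α ι ℂ) (B : Matrix β ι ℂ) (C : Matrix γ ι ℂ)
    (M : Matrix ι κ ℂ) :
    vcat3 A B C * M = vcat3 (A * M) (B * M) (C * M) := by
  ext x y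
  rcases x with x | x | x <;> rfl

lemma neg_vcat3 (A : Matrix α κ ℂ) (B : Matrix β κ ℂ) (C : Matrix γ κ ℂ) :
    -vcat3 A B C = vcat3 (-A) (-B) (-C) := by
  ext x y
  rcases x with x | x | x <;> rfl

lemma mul_add_smul_add_mul_eq_hcat3_mul_vcat3 [Fintype δ] [Fintype γ] (μ : ℂ)
    (X : Matrix ι δ ℂ) (G : Matrix δ γ ℂ) (D₀ D₁ : Matrix δ κ ℂ) (D₂ : Matrix γ κ ℂ) :
    X * (D₀ + μ • D₁ + G * D₂) = hcat3 X (μ • X) (X * G) * vcat3 D₀ D₁ D₂ := by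
  rw [hcat3_mul_vcat3, Matrix.mul_add, Matrix.mul_add, Matrix.mul_smul, Matrix.smul_mul,
    Matrix.mul_assoc]

lemma neg_conjTranspose_hcat3_mul [Fintype ι] [Fintype δ] (μ : ℂ) (X : Matrix ι δ ℂ) (G : Matrix δ γ ℂ)
    (Y : Matrix ι κ ℂ) :
    -((hcat3 X (μ • X) (X * G))ᴴ * Y) =
      vcat3 (-(Xᴴ * Y)) (-(star μ • (Xᴴ * Y))) (-((X * G)ᴴ * Y)) := by
  rw [conjTranspose_hcat3, vcat3_mul, neg_vcat3, conjTranspose_smul, Matrix.smul_mul]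

end BlockMatrices

section Norms

variable {ι κ : Type*} [Fintype ι] [Fintype κ]

lemma star_dotProduct_self_eq_evnorm_sq (v : ι → ℂ) :
    star v ⬝ᵥ v = ((evnorm v ^ 2 : ℝ) : ℂ) := by
  rw [evnorm, Real.sq_sqrt (by positivity), Complex.ofReal_sum]
  refine Finset.sum_congr rfl fun i _ => ?_
  rw [Pi.star_apply, Complex.star_def, ← Complex.normSq_eq_conj_mul_self,
    Complex.normSq_eq_norm_sq]

lemma evnorm_smul (c : ℂ) (v : ι → ℂ) : evnorm (c • v) = ‖c‖ * evnorm v := by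
  simp only [evnorm, Pi.smul_apply, smul_eq_mul, norm_mul, mul_pow, ← Finset.mul_sum]
  rw [Real.sqrt_mul (by positivity), Real.sqrt_sq (norm_nonneg c)]

lemma evnorm_star (v : ι → ℂ) : evnorm (star v) = evnorm v := by
  simp only [evnorm, Pi.star_apply, norm_star]

lemma frob_vecMulVec (u : ι → ℂ) (w : κ → ℂ) : frob (vecMulVec u w) = evnorm u * evnorm w := by
  simp only [frob, evnorm, vecMulVec_apply, norm_mul, mul_pow, ← Finset.mul_sum,
    ← Finset.sum_mul]
  exact Real.sqrt_mul (by positivity) _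

lemma evnorm_conjTranspose_mulVec (M : Matrix ι κ ℂ) {v : ι → ℂ} {s : ℝ} (hs : 0 ≤ s)
    (h : (M * Mᴴ) *ᵥ v = ((s : ℂ) ^ 2) • v) : evnorm (Mᴴ *ᵥ v) = s * evnorm v := by
  have hsq : star (Mᴴ *ᵥ v) ⬝ᵥ (Mᴴ *ᵥ v) = (s : ℂ) ^ 2 * (star v ⬝ᵥ v) := by
    rw [star_mulVec, conjTranspose_conjTranspose, ← dotProduct_mulVec, mulVec_mulVec, h,
      dotProduct_smul, smul_eq_mul]
  rw [star_dotProduct_self_eq_evnorm_sq, star_dotProduct_self_eq_evnorm_sq] at hsq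
  have hsq' : evnorm (Mᴴ *ᵥ v) ^ 2 = (s * evnorm v) ^ 2 := by
    rw [mul_pow]; exact_mod_cast hsq
  exact (pow_left_inj₀ (Real.sqrt_nonneg _) (mul_nonneg hs (Real.sqrt_nonneg _))
    two_ne_zero).mp hsq'

lemma sigmaMin_nonneg (T : Matrix ι κ ℂ) : 0 ≤ sigmaMin T :=
  Real.sInf_nonneg fun _ ⟨_, _, hx⟩ => hx ▸ Real.sqrt_nonneg _

end Norms

lemma inv_mulVec_eq_inv_smul {ι K : Type*} [Fintype ι] [DecidableEq ι] [Field K]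
    {M : Matrix ι ι K} (hM : IsUnit M) {v : ι → K} {c : K} (h : M *ᵥ v = c • v) :
    M⁻¹ *ᵥ v = c⁻¹ • v := by
  have hv : v = c • M⁻¹ *ᵥ v := by
    rw [← mulVec_smul, ← h, mulVec_mulVec, nonsing_inv_mul _ ((isUnit_iff_isUnit_det M).mp hM),
      one_mulVec]
  rcases eq_or_ne c 0 with rfl | hc
  · rw [zero_smul] at hv
    rw [hv, mulVec_zero, smul_zero]
  · conv_rhs => rw [hv, smul_smul, inv_mul_cancel₀ hc, one_smul]

section MinNormPerturbation

variable {ι κ : Type*} [Fintype ι] [DecidableEq ι] [Fintype κ]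

/-- The minimum-Frobenius-norm solution `Δ` of `S Δ = -v v*`. -/
noncomputable def minNormPerturbation (S : Matrix ι κ ℂ) (v : ι → ℂ) : Matrix κ ι ℂ :=
  -(Sᴴ * ((S * Sᴴ)⁻¹ * vecMulVec v (star v)))

lemma mul_minNormPerturbation {S : Matrix ι κ ℂ} (hS : IsUnit (S * Sᴴ)) (v : ι → ℂ) :
    S * minNormPerturbation S v = -vecMulVec v (star v) := by
  rw [minNormPerturbation, Matrix.mul_neg, ← Matrix.mul_assoc,
    mul_nonsing_inv_cancel_left _ _ ((isUnit_iff_isUnit_det _).mp hS)]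

lemma frob_minNormPerturbation {S : Matrix ι κ ℂ} (hS : IsUnit (S * Sᴴ)) {v : ι → ℂ}
    (hv : evnorm v = 1) {s : ℝ} (hs : 0 ≤ s) (h : (S * Sᴴ) *ᵥ v = ((s : ℂ) ^ 2) • v) :
    frob (minNormPerturbation S v) = 1 / s := by
  rw [minNormPerturbation, mul_vecMulVec, mul_vecMulVec, inv_mulVec_eq_inv_smul hS h,
    mulVec_smul, ← neg_vecMulVec, ← neg_smul, frob_vecMulVec, evnorm_smul,
    evnorm_conjTranspose_mulVec S hs h, evnorm_star, hv, norm_neg, norm_inv, norm_pow,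
    Complex.norm_real, Real.norm_of_nonneg hs]
  rcases eq_or_ne s 0 with rfl | hs0
  · simp
  · field_simp

end MinNormPerturbation

theorem stmt6_general {n r : ℕ} (μ : ℂ)
    (A E : Matrix (Fin r) (Fin r) ℂ)
    (C : Matrix (Fin n) (Fin r) ℂ)
    (R : Matrix (Fin n) (Fin n) ℂ)
    (hRu : IsUnit R)
    (S : Matrix (Fin n) (Fin n ⊕ Fin n ⊕ Fin r) ℂ)
    (hS : S = hcat3 R⁻¹ (μ • R⁻¹) (R⁻¹ * (C * (A - μ • E)⁻¹)))
    (hfull : IsUnit (S * Sᴴ))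
    (v : Fin n → ℂ) (hv : evnorm v = 1)
    (hsing : (S * Sᴴ).mulVec v = ((sigmaMin Sᴴ : ℂ) ^ 2) • v)
    (Z : Matrix (Fin n) (Fin n) ℂ) (hZ : Z = (S * Sᴴ)⁻¹)
    (ΔA0 ΔA1 : Matrix (Fin n) (Fin n) ℂ) (ΔB : Matrix (Fin r) (Fin n) ℂ)
    (hΔA0 : ΔA0 = -((R⁻¹)ᴴ * Z * vecMulVec v (star v)))
    (hΔA1 : ΔA1 = -(starRingEnd ℂ μ • ((R⁻¹)ᴴ * Z * vecMulVec v (star v))))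
    (hΔB : ΔB = -((R⁻¹ * (C * (A - μ • E)⁻¹))ᴴ * Z * vecMulVec v (star v))) :
    ((1 : Matrix (Fin n) (Fin n) ℂ) +
        R⁻¹ * (ΔA0 + μ • ΔA1 + C * (A - μ • E)⁻¹ * ΔB)).mulVec v = 0 ∧
    (R + (ΔA0 + μ • ΔA1 + C * (A - μ • E)⁻¹ * ΔB)).det = 0 ∧
    frob (vcat3 ΔA0 ΔA1 ΔB) = 1 / sigmaMin Sᴴ := by
  set ΔR := ΔA0 + μ • ΔA1 + C * (A - μ • E)⁻¹ * ΔB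
  have hΔ : vcat3 ΔA0 ΔA1 ΔB = minNormPerturbation S v := by
    rw [hΔA0, hΔA1, hΔB, hZ, minNormPerturbation, hS, neg_conjTranspose_hcat3_mul]
    simp only [Matrix.mul_assoc, starRingEnd_apply]
  have hRΔR : R⁻¹ * ΔR = -vecMulVec v (star v) := by
    rw [mul_add_smul_add_mul_eq_hcat3_mul_vcat3, ← hS, hΔ, mul_minNormPerturbation hfull]
  have hvv : star v ⬝ᵥ v = 1 := by
    rw [star_dotProduct_self_eq_evnorm_sq, hv]; norm_num
  have hker : (1 + R⁻¹ * ΔR) *ᵥ v = 0 := by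
    rw [hRΔR, add_mulVec, one_mulVec, neg_mulVec, vecMulVec_mulVec, hvv]
    simp
  refine ⟨hker, ?_, ?_⟩
  · have hv0 : v ≠ 0 := by
      rintro rfl
      simp [evnorm] at hv
    have hfactor : R + ΔR = R * (1 + R⁻¹ * ΔR) := by
      rw [Matrix.mul_add, Matrix.mul_one,
        mul_nonsing_inv_cancel_left _ _ ((isUnit_iff_isUnit_det R).mp hRu)]
    rw [hfactor, det_mul, (exists_mulVec_eq_zero_iff).mp ⟨v, hv0, hker⟩, mul_zero]
  · rw [hΔ, frob_minNormPerturbation hfull hv (sigmaMin_nonneg _) hsing]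

theorem stmt6 {n r : ℕ} (μ : ℂ)
    (A0 A1 : Matrix (Fin n) (Fin n) ℂ)
    (A E : Matrix (Fin r) (Fin r) ℂ) (B : Matrix (Fin r) (Fin n) ℂ)
    (C : Matrix (Fin n) (Fin r) ℂ)
    (hAE : IsUnit (A - μ • E))
    (R : Matrix (Fin n) (Fin n) ℂ)
    (hR : R = A0 + μ • A1 + C * ((A - μ • E)⁻¹ * B))
    (hRu : IsUnit R)
    (S : Matrix (Fin n) (Fin n ⊕ Fin n ⊕ Fin r) ℂ)
    (hS : S = hcat3 R⁻¹ (μ • R⁻¹) (R⁻¹ * (C * (A - μ • E)⁻¹)))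
    (hfull : IsUnit (S * Sᴴ))
    (v : Fin n → ℂ) (hv : evnorm v = 1)
    (hsing : (S * Sᴴ).mulVec v = ((sigmaMin Sᴴ : ℂ) ^ 2) • v)
    (Z : Matrix (Fin n) (Fin n) ℂ) (hZ : Z = (S * Sᴴ)⁻¹)
    (ΔA0 ΔA1 : Matrix (Fin n) (Fin n) ℂ) (ΔB : Matrix (Fin r) (Fin n) ℂ)
    (hΔA0 : ΔA0 = -((R⁻¹)ᴴ * Z * vecMulVec v (star v)))
    (hΔA1 : ΔA1 = -(starRingEnd ℂ μ • ((R⁻¹)ᴴ * Z * vecMulVec v (star v))))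
    (hΔB : ΔB = -((R⁻¹ * (C * (A - μ • E)⁻¹))ᴴ * Z * vecMulVec v (star v))) :
    ((1 : Matrix (Fin n) (Fin n) ℂ) +
        R⁻¹ * (ΔA0 + μ • ΔA1 + C * (A - μ • E)⁻¹ * ΔB)).mulVec v = 0 ∧
    (R + (ΔA0 + μ • ΔA1 + C * (A - μ • E)⁻¹ * ΔB)).det = 0 ∧
    frob (vcat3 ΔA0 ΔA1 ΔB) = 1 / sigmaMin Sᴴ :=
  stmt6_general μ A E C R hRu S hS hfull v hv hsing Z hZ ΔA0 ΔA1 ΔB hΔA0 hΔA1 hΔB
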